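/- arXiv:1401.4499 — 4 statements merged into one kernel-verified Lean document; each statement's English description precedes it below -/
import Mathlib

section
/- For all integers i, i' ≥ 1 and all q, q' ∈ {1,2}: pᵠᵢ · zᵠᵢ = 1, and if (i,q) ≠ (i',q') then pᵠᵢ · z^{q'}_{i'} > 1 (dot products in ℝ²). -/
open Matrix

noncomputable section

/-- The vectors `z¹ᵢ = (i, 1/i)` (for `q = 0`) and `z²ᵢ = (i + 1/2, 1/(i + 1/2))` (for `q = 1`). -/
def zv (q : Fin 2) (i : ℕ) : Fin 2 → ℝ :=
  if q = 0 then ![(i : ℝ), 1 / (i : ℝ)]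
  else ![(i : ℝ) + 1 / 2, 1 / ((i : ℝ) + 1 / 2)]

/-- The price vectors `p¹ᵢ = (1/(2i), i/2)` (for `q = 0`) and
`p²ᵢ = (1/(2i+1), i/2 + 1/4)` (for `q = 1`). -/
def pv (q : Fin 2) (i : ℕ) : Fin 2 → ℝ :=
  if q = 0 then ![1 / (2 * (i : ℝ)), (i : ℝ) / 2]
  else ![1 / (2 * (i : ℝ) + 1), (i : ℝ) / 2 + 1 / 4]

lemma gt1 (x y : ℝ) (hx : 0 < x) (hy : 0 < y) (h : x ≠ y) :
    1 < 1/(2*x)*y + x/2*(1/y) := by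
  have hne : x - y ≠ 0 := sub_ne_zero.mpr h
  have hsq : 0 < (x - y)^2 := by positivity
  have heq : 1/(2*x)*y + x/2*(1/y) = (x^2+y^2)/(2*(x*y)) := by
    field_simp; ring
  rw [heq, lt_div_iff₀ (by positivity)]
  nlinarith

/-- For all integers `i, i' ≥ 1` and all `q, q' ∈ {1,2}`: `pᵠᵢ · zᵠᵢ = 1`,
and if `(i,q) ≠ (i',q')` then `pᵠᵢ · z^{q'}_{i'} > 1`. -/
theorem statement0 (i i' : ℕ) (hi : 1 ≤ i) (hi' : 1 ≤ i') (q q' : Fin 2) :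
    pv q i ⬝ᵥ zv q i = 1 ∧ ((i, q) ≠ (i', q') → 1 < pv q i ⬝ᵥ zv q' i') := by
  have ha : (1:ℝ) ≤ (i:ℝ) := by exact_mod_cast hi
  have hb : (1:ℝ) ≤ (i':ℝ) := by exact_mod_cast hi'
  have ha0 : (0:ℝ) < (i:ℝ) := by linarith
  have hb0 : (0:ℝ) < (i':ℝ) := by linarith
  fin_cases q <;> fin_cases q' <;>
    simp only [pv, zv, dotProduct, Fin.sum_univ_two, Fin.mk_zero, Fin.mk_one,
      Fin.isValue, if_true, one_ne_zero, if_false, ite_true, ite_false, reduceIte,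
      Matrix.cons_val_zero, Matrix.cons_val_one, Matrix.head_cons,
      ne_eq, Prod.mk.injEq, not_and] <;>
    constructor
  · field_simp; ring
  · intro h
    have hne : (i:ℝ) ≠ (i':ℝ) := by
      have : i ≠ i' := by simpa using h
      exact_mod_cast this
    exact gt1 _ _ ha0 hb0 hne
  · field_simp; ring
  · intro _
    have hne : (i:ℝ) ≠ (i':ℝ) + 1/2 := by
      intro hh
      have : (2*i:ℝ) = 2*i' + 1 := by linarith
      have : (2*i:ℕ) = 2*i' + 1 := by exact_mod_cast this
      omega
    have := gt1 (i:ℝ) ((i':ℝ)+1/2) ha0 (by linarith) hne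
    linarith
  · have h1 : ((i:ℝ)+1/2) ≠ 0 := by linarith
    field_simp
    ring
  · intro _
    have hne : (i:ℝ)+1/2 ≠ (i':ℝ) := by
      intro hh
      have : (2*i + 1:ℝ) = 2*i' := by linarith
      have : (2*i + 1:ℕ) = 2*i' := by exact_mod_cast this
      omega
    have := gt1 ((i:ℝ)+1/2) (i':ℝ) (by linarith) hb0 hne
    have heq : 1/(2*((i:ℝ)+1/2))*(i':ℝ) + ((i:ℝ)+1/2)/2*(1/(i':ℝ))
        = 1/(2*(i:ℝ)+1)*(i':ℝ) + ((i:ℝ)/2+1/4)*(1/(i':ℝ)) := by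
      ring_nf
    linarith [heq ▸ this]
  · have h1 : ((i:ℝ)+1/2) ≠ 0 := by linarith
    field_simp
    ring
  · intro h
    have hne : (i:ℝ)+1/2 ≠ (i':ℝ)+1/2 := by
      have : i ≠ i' := by simpa using h
      have : (i:ℝ) ≠ (i':ℝ) := by exact_mod_cast this
      intro hh; exact this (by linarith)
    have := gt1 ((i:ℝ)+1/2) ((i':ℝ)+1/2) (by linarith) (by linarith) hne
    have heq : 1/(2*((i:ℝ)+1/2))*((i':ℝ)+1/2) + ((i:ℝ)+1/2)/2*(1/((i':ℝ)+1/2))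
        = 1/(2*(i:ℝ)+1)*((i':ℝ)+1/2) + ((i:ℝ)/2+1/4)*(1/((i':ℝ)+1/2)) := by
      ring_nf
    linarith [heq ▸ this]
end
end

section
/- For every integer I ≥ 1 there exist real numbers ε > 0 and M > 0 such that for all i, i' ∈ {1,…,I} and q, q' ∈ {1,2} with (i,q) ≠ (i',q'): 1 < pᵠᵢ · zᵠᵢ + ε pᵠᵢ · (1,1) < pᵠᵢ · z^{q'}_{i'}, and pᵠᵢ · z^{q'}_{i'} + ε pᵠᵢ · (1,1) < M. -/
open Matrix

noncomputable section

def av (q : Fin 2) (i : ℕ) : ℝ := if q = 0 then (i : ℝ) else (i : ℝ) + 1 / 2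

lemma av_one_le {q : Fin 2} {i : ℕ} (hi : 1 ≤ i) : 1 ≤ av q i := by
  have : (1:ℝ) ≤ (i:ℝ) := by exact_mod_cast hi
  unfold av; split <;> linarith

lemma av_le {q : Fin 2} {i I : ℕ} (hi : i ≤ I) : av q i ≤ (I:ℝ) + 1 := by
  have : (i:ℝ) ≤ (I:ℝ) := by exact_mod_cast hi
  unfold av; split <;> linarith

lemma pv_eq (q : Fin 2) (i : ℕ) : pv q i = ![1 / (2 * av q i), av q i / 2] := by
  unfold pv av
  split
  · rfl
  · rw [show 2 * ((i:ℝ) + 1/2) = 2 * (i:ℝ) + 1 from by ring,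
      show ((i:ℝ) + 1/2) / 2 = (i:ℝ)/2 + 1/4 from by ring]

lemma zv_eq (q : Fin 2) (i : ℕ) : zv q i = ![av q i, 1 / av q i] := by
  unfold zv av
  split <;> rfl

lemma dot_pair (q q' : Fin 2) (i i' : ℕ) :
    pv q i ⬝ᵥ zv q' i' = av q' i' / (2 * av q i) + av q i / (2 * av q' i') := by
  rw [pv_eq, zv_eq]
  simp [dotProduct, Fin.sum_univ_two]
  ring

lemma dot_self (q : Fin 2) (i : ℕ) (hi : 1 ≤ i) : pv q i ⬝ᵥ zv q i = 1 := by
  rw [dot_pair]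
  have h : (0:ℝ) < av q i := lt_of_lt_of_le one_pos (av_one_le hi)
  field_simp
  ring

lemma dot_one (q : Fin 2) (i : ℕ) :
    pv q i ⬝ᵥ ![1, 1] = 1 / (2 * av q i) + av q i / 2 := by
  rw [pv_eq]
  simp [dotProduct, Fin.sum_univ_two]

lemma gap {i i' : ℕ} {q q' : Fin 2} (h : (i, q) ≠ (i', q')) :
    1 / 2 ≤ |av q i - av q' i'| := by
  rcases eq_or_ne q q' with rfl | hq
  · have hii : i ≠ i' := by
      intro h'; exact h (by rw [h'])
    have heq : av q i - av q i' = (i:ℝ) - (i':ℝ) := by unfold av; split <;> ring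
    rw [heq, le_abs]
    rcases lt_or_gt_of_ne hii with h' | h'
    · have : (i:ℝ) + 1 ≤ (i':ℝ) := by exact_mod_cast h'
      right; linarith
    · have : (i':ℝ) + 1 ≤ (i:ℝ) := by exact_mod_cast h'
      left; linarith
  · fin_cases q <;> fin_cases q'
    · simp at hq
    · -- q = 0, q' = 1 : |i - (i' + 1/2)|
      simp only [av]
      norm_num
      rw [le_abs]
      rcases le_or_gt i i' with h' | h'
      · have : (i:ℝ) ≤ (i':ℝ) := by exact_mod_cast h'
        right; linarith
      · have : (i':ℝ) + 1 ≤ (i:ℝ) := by exact_mod_cast h'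
        left; linarith
    · -- q = 1, q' = 0 : |(i + 1/2) - i'|
      simp only [av]
      norm_num
      rw [le_abs]
      rcases le_or_gt i' i with h' | h'
      · have : (i':ℝ) ≤ (i:ℝ) := by exact_mod_cast h'
        left; linarith
      · have : (i:ℝ) + 1 ≤ (i':ℝ) := by exact_mod_cast h'
        right; linarith
    · simp at hq

set_option maxHeartbeats 1000000 in
lemma key {T a b : ℝ} (hT : 1 ≤ T) (ha1 : 1 ≤ a) (hb1 : 1 ≤ b)
    (haT : a ≤ T) (hbT : b ≤ T) (hab : 1 / 2 ≤ |a - b|) :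
    1 < 1 + 1 / (16 * T ^ 3) * (1 / (2 * a) + a / 2) ∧
    1 + 1 / (16 * T ^ 3) * (1 / (2 * a) + a / 2) < b / (2 * a) + a / (2 * b) ∧
    b / (2 * a) + a / (2 * b) + 1 / (16 * T ^ 3) * (1 / (2 * a) + a / 2) < T ^ 2 + 1 := by
  have ha0 : 0 < a := by linarith
  have hb0 : 0 < b := by linarith
  have hT0 : 0 < T := by linarith
  have hsq : 1 / 4 ≤ (a - b) ^ 2 := by
    nlinarith [sq_abs (a - b), abs_nonneg (a - b)]
  have hden : (0:ℝ) < 32 * a * b * T ^ 3 := by positivity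
  have haa : a ^ 2 ≤ T ^ 2 := by nlinarith
  have hbb : b ^ 2 ≤ T ^ 2 := by nlinarith
  have hbT3 : b ≤ T ^ 3 := by nlinarith
  have ha2b : a ^ 2 * b ≤ T ^ 3 := by nlinarith
  have hab1 : 1 ≤ a * b := by nlinarith
  have hP : 0 < 1 / (16 * T ^ 3) * (1 / (2 * a) + a / 2) := by positivity
  refine ⟨by linarith, ?_, ?_⟩
  · have e2 : b / (2 * a) + a / (2 * b) - (1 + 1 / (16 * T ^ 3) * (1 / (2 * a) + a / 2)) =
        (16 * T ^ 3 * (a - b) ^ 2 - b - a ^ 2 * b) / (32 * a * b * T ^ 3) := by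
      field_simp
      ring
    have hnum : 0 < 16 * T ^ 3 * (a - b) ^ 2 - b - a ^ 2 * b := by
      have h4 : 4 * T ^ 3 ≤ 16 * T ^ 3 * (a - b) ^ 2 := by nlinarith [pow_pos hT0 3]
      nlinarith [pow_pos hT0 3]
    have hpos := div_pos hnum hden
    rw [← e2] at hpos
    linarith
  · have e3 : T ^ 2 + 1 - (b / (2 * a) + a / (2 * b) + 1 / (16 * T ^ 3) * (1 / (2 * a) + a / 2)) =
        (32 * a * b * T ^ 5 + 32 * a * b * T ^ 3 - 16 * T ^ 3 * (a ^ 2 + b ^ 2) - b - a ^ 2 * b) /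
          (32 * a * b * T ^ 3) := by
      field_simp
      ring
    have hnum : 0 < 32 * a * b * T ^ 5 + 32 * a * b * T ^ 3 - 16 * T ^ 3 * (a ^ 2 + b ^ 2)
        - b - a ^ 2 * b := by
      have h1 : 0 ≤ (a * b - 1) * T ^ 5 := by
        apply mul_nonneg (by linarith) (by positivity)
      have h2 : 0 ≤ (2 * T ^ 2 - a ^ 2 - b ^ 2) * T ^ 3 := by
        apply mul_nonneg (by linarith) (by positivity)
      have h3 : 0 ≤ (a * b - 1) * T ^ 3 := by
        apply mul_nonneg (by linarith) (by positivity)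
      nlinarith [pow_pos hT0 3]
    have hpos := div_pos hnum hden
    rw [← e3] at hpos
    linarith

/-- for every `I ≥ 1` there are `ε > 0` and `M > 0` such that for all
`i, i' ∈ {1,…,I}` and `q, q' ∈ {1,2}` with `(i,q) ≠ (i',q')`:
`1 < pᵠᵢ·zᵠᵢ + ε pᵠᵢ·(1,1) < pᵠᵢ·z^{q'}_{i'}` and `pᵠᵢ·z^{q'}_{i'} + ε pᵠᵢ·(1,1) < M`. -/
theorem statement3 (I : ℕ) (hI : 1 ≤ I) :
    ∃ ε : ℝ, 0 < ε ∧ ∃ M : ℝ, 0 < M ∧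
      ∀ (i i' : ℕ) (q q' : Fin 2), 1 ≤ i → i ≤ I → 1 ≤ i' → i' ≤ I →
        (i, q) ≠ (i', q') →
        1 < pv q i ⬝ᵥ zv q i + ε * (pv q i ⬝ᵥ ![1, 1]) ∧
        pv q i ⬝ᵥ zv q i + ε * (pv q i ⬝ᵥ ![1, 1]) < pv q i ⬝ᵥ zv q' i' ∧
        pv q i ⬝ᵥ zv q' i' + ε * (pv q i ⬝ᵥ ![1, 1]) < M := by
  set T : ℝ := (I:ℝ) + 1 with hTdef
  have hT : 1 ≤ T := by
    have h0 : (0:ℝ) ≤ (I:ℝ) := Nat.cast_nonneg I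
    rw [hTdef]; linarith
  have hT0 : 0 < T := by linarith
  refine ⟨1 / (16 * T ^ 3), by positivity, T ^ 2 + 1, by positivity, ?_⟩
  intro i i' q q' hi hiI hi' hi'I hne
  have ha1 : 1 ≤ av q i := av_one_le hi
  have hb1 : 1 ≤ av q' i' := av_one_le hi'
  have haT : av q i ≤ T := av_le hiI
  have hbT : av q' i' ≤ T := av_le hi'I
  have hab := gap hne
  obtain ⟨k1, k2, k3⟩ := key hT ha1 hb1 haT hbT hab
  rw [dot_self q i hi, dot_pair q q' i i', dot_one]
  exact ⟨k1, k2, k3⟩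
end
end

section
/- For every integer I ≥ 1 and every truth assignment τ : {1,…,I} → {0,1} there exists a function u : ℝ²₊ → ℝ such that: (a) u(z) > u(z') whenever z, z' ∈ ℝ²₊ and z > z' in the componentwise order (z ≥ z' in both coordinates and z ≠ z'); and (b) for every i ∈ {1,…,I}, u(z¹ᵢ) > u(z²ᵢ) if τ(i) = 1, and u(z²ᵢ) > u(z¹ᵢ) if τ(i) = 0. -/
open Matrix

noncomputable section

/-!
The coordinate sum `z₀ + z₁` is strictly increasing for the componentwise order and already
ranks `z²ᵢ` above `z¹ᵢ`, by the margin `1/2 - 1/(i(2i+1))`. Subtract `L · dist(z₀, A)`, where `A`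
is the set of abscissae of the points that `τ` ranks higher: for `L < 1` this keeps strict
monotonicity, the correction being `L`-Lipschitz in `z₀` alone. The correction vanishes at the
preferred point of each pair and is at least `L/2` at the other one, since the abscissae
`i` and `i + 1/2` are distinct half-integers; with `L = 1 - 1/(I+1)²` this overturns the margin
for every `i ≤ I`.
-/

open Metric NNReal

lemma LipschitzWith.strictMono_id_sub {f : ℝ → ℝ} {K : ℝ≥0} (hf : LipschitzWith K f)
    (hK : K < 1) : StrictMono fun x => x - f x := by
  intro x y hxy
  have hfxy : f y - f x ≤ K * (y - x) := by
    simpa [Real.dist_eq, abs_of_pos (sub_pos.2 hxy)] using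
      (le_abs_self _).trans (hf.dist_le_mul y x)
  have : (K : ℝ) * (y - x) < y - x := mul_lt_of_lt_one_left (sub_pos.2 hxy) hK
  show x - f x < y - f y
  linarith

lemma StrictMono.add_fin_two {α β : Type*} [PartialOrder α] [AddCommMonoid β] [PartialOrder β]
    [IsOrderedCancelAddMonoid β] {g h : α → β} (hg : StrictMono g) (hh : StrictMono h) :
    StrictMono fun z : Fin 2 → α => g (z 0) + h (z 1) := by
  intro z z' hlt
  obtain ⟨hle, k, hk⟩ := Pi.lt_def.1 hlt
  fin_cases k
  · exact add_lt_add_of_lt_of_le (hg hk) (hh.monotone (hle 1))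
  · exact add_lt_add_of_le_of_lt (hg.monotone (hle 0)) (hh hk)

lemma two_mul_zv_zero (q : Fin 2) (i : ℕ) : 2 * zv q i 0 = ((2 * i + q : ℕ) : ℝ) := by
  fin_cases q <;> norm_num [zv]; ring

lemma half_le_abs_zv_zero_sub {q q' : Fin 2} {i j : ℕ} (h : (q, i) ≠ (q', j)) :
    1 / 2 ≤ |zv q i 0 - zv q' j 0| := by
  have hne : 2 * i + (q : ℕ) ≠ 2 * j + q' := by
    intro heq
    have hij : i = j := by omega
    subst hij
    exact h (by rw [Fin.ext (by omega : (q : ℕ) = q')])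
  have h1 : (1 : ℝ) ≤ |((2 * i + q : ℕ) : ℝ) - ((2 * j + q' : ℕ) : ℝ)| := by
    have : (1 : ℤ) ≤ |((2 * i + q : ℕ) : ℤ) - ((2 * j + q' : ℕ) : ℤ)| :=
      Int.one_le_abs (sub_ne_zero.2 (by exact_mod_cast hne))
    exact_mod_cast this
  rw [← two_mul_zv_zero, ← two_mul_zv_zero, ← mul_sub, abs_mul, abs_two] at h1
  linarith

lemma zv_one_sum_sub_zv_zero_sum {i : ℕ} (hi : i ≠ 0) :
    (zv 1 i 0 + zv 1 i 1) - (zv 0 i 0 + zv 0 i 1) = 1 / 2 - 1 / (i * (2 * i + 1)) := by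
  have : (i : ℝ) ≠ 0 := by exact_mod_cast hi
  norm_num [zv]
  field_simp
  ring

def preferred (τ : ℕ → Bool) (i : ℕ) : Fin 2 := if τ i then 0 else 1

def preferredAbscissae (τ : ℕ → Bool) : Set ℝ := Set.range fun j => zv (preferred τ j) j 0

lemma infDist_zv_preferred (τ : ℕ → Bool) (i : ℕ) :
    infDist (zv (preferred τ i) i 0) (preferredAbscissae τ) = 0 :=
  infDist_zero_of_mem ⟨i, rfl⟩

lemma half_le_infDist_zv {τ : ℕ → Bool} {q : Fin 2} {i : ℕ} (hq : q ≠ preferred τ i) :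
    1 / 2 ≤ infDist (zv q i 0) (preferredAbscissae τ) := by
  refine (le_infDist (Set.range_nonempty _)).2 ?_
  rintro _ ⟨j, rfl⟩
  refine half_le_abs_zv_zero_sub fun h => hq ?_
  obtain ⟨rfl, rfl⟩ := Prod.mk.inj h
  rfl

def utility (L : ℝ) (τ : ℕ → Bool) (z : Fin 2 → ℝ) : ℝ :=
  z 0 - L * infDist (z 0) (preferredAbscissae τ) + z 1

lemma strictMono_utility {L : ℝ} (hL : |L| < 1) (τ : ℕ → Bool) : StrictMono (utility L τ) := by
  have hlip := (lipschitzWith_smul L).comp (lipschitz_infDist_pt (preferredAbscissae τ))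
  have hK : ‖L‖₊ * 1 < 1 := by
    rw [mul_one, ← NNReal.coe_lt_coe, coe_nnnorm, Real.norm_eq_abs]
    exact_mod_cast hL
  exact (hlip.strictMono_id_sub hK).add_fin_two strictMono_id

lemma utility_zv_lt_utility_zv_preferred {L : ℝ} {τ : ℕ → Bool} {q : Fin 2} {i : ℕ}
    (hi : i ≠ 0) (hL0 : 0 ≤ L) (hL : 1 - 2 / (i * (2 * i + 1)) < L) (hq : q ≠ preferred τ i) :
    utility L τ (zv q i) < utility L τ (zv (preferred τ i) i) := by
  have hsum := zv_one_sum_sub_zv_zero_sum hi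
  have hdist := half_le_infDist_zv hq
  have hpos : (0 : ℝ) < 1 / (i * (2 * i + 1)) := by positivity
  unfold utility
  rw [infDist_zv_preferred]
  cases hτ : τ i
  · have hp : preferred τ i = 1 := by simp [preferred, hτ]
    obtain rfl : q = 0 := by fin_cases q <;> simp_all
    have h3 : 1 / ((i : ℝ) * (2 * i + 1)) ≤ 1 / 3 := by
      have : (1 : ℝ) ≤ i := by exact_mod_cast Nat.one_le_iff_ne_zero.2 hi
      gcongr
      nlinarith
    have : 0 ≤ L * infDist (zv 0 i 0) (preferredAbscissae τ) := by positivity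
    rw [hp]
    linarith
  · have hp : preferred τ i = 0 := by simp [preferred, hτ]
    obtain rfl : q = 1 := by fin_cases q <;> simp_all
    have : L / 2 ≤ L * infDist (zv 1 i 0) (preferredAbscissae τ) := by nlinarith
    rw [hp]
    rw [div_eq_mul_one_div 2] at hL
    linarith

theorem statement4_general (I : ℕ) (τ : ℕ → Bool) :
    ∃ u : (Fin 2 → ℝ) → ℝ,
      (∀ z z' : Fin 2 → ℝ, 0 ≤ z' → z' ≤ z → z ≠ z' → u z > u z') ∧
      (∀ i : ℕ, 1 ≤ i → i ≤ I →
        (τ i = true → u (zv 0 i) > u (zv 1 i)) ∧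
        (τ i = false → u (zv 1 i) > u (zv 0 i))) := by
  set L : ℝ := 1 - 1 / ((I : ℝ) + 1) ^ 2
  have hpos : 0 < 1 / ((I : ℝ) + 1) ^ 2 := by positivity
  have hL0 : 0 ≤ L := by
    have : (1 : ℝ) ≤ ((I : ℝ) + 1) ^ 2 := by nlinarith [(I.cast_nonneg : (0 : ℝ) ≤ I)]
    simpa [L] using (div_le_one (by positivity)).2 this
  have hL1 : |L| < 1 := by rw [abs_of_nonneg hL0]; linarith
  refine ⟨utility L τ, fun z z' _ hle hne => strictMono_utility hL1 τ (lt_of_le_of_ne hle hne.symm),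
    fun i hi hiI => ?_⟩
  have hLi : 1 - 2 / (i * (2 * i + 1)) < L := by
    have : (i : ℝ) ≤ I := by exact_mod_cast hiI
    have : (1 : ℝ) ≤ i := by exact_mod_cast hi
    suffices 1 / ((I : ℝ) + 1) ^ 2 < 2 / (i * (2 * i + 1)) by linarith
    rw [div_lt_div_iff₀ (by positivity) (by positivity)]
    nlinarith
  have key (q : Fin 2) := utility_zv_lt_utility_zv_preferred (τ := τ) (q := q) (by omega) hL0 hLi
  constructor
  · intro hτ
    have hp : preferred τ i = 0 := by simp [preferred, hτ]
    exact hp ▸ key 1 (by rw [hp]; decide)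
  · intro hτ
    have hp : preferred τ i = 1 := by simp [preferred, hτ]
    exact hp ▸ key 0 (by rw [hp]; decide)

/-- for every `I ≥ 1` and truth assignment `τ` there is `u : ℝ²₊ → ℝ` with
(a) `u z > u z'` whenever `z > z'` componentwise (on the nonnegative orthant), and
(b) `u` represents the relation `B` induced by `τ`: for `i ∈ {1,…,I}`,
`u z¹ᵢ > u z²ᵢ` if `τ i = true`, and `u z²ᵢ > u z¹ᵢ` if `τ i = false`. -/
theorem statement4 (I : ℕ) (hI : 1 ≤ I) (τ : ℕ → Bool) :
    ∃ u : (Fin 2 → ℝ) → ℝ,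
      (∀ z z' : Fin 2 → ℝ, 0 ≤ z' → z' ≤ z → z ≠ z' → u z > u z') ∧
      (∀ i : ℕ, 1 ≤ i → i ≤ I →
        (τ i = true → u (zv 0 i) > u (zv 1 i)) ∧
        (τ i = false → u (zv 1 i) > u (zv 0 i))) :=
  statement4_general I τ
end
end

section
/- If the dataset D(φ) = {(wˡ_t, rˡ_t) : l = 1,…,L, t ∈ {1,2,4,5,7,8}} (with n = 2 goods of type z and m = 7 goods of type o) is rationalizable by separable preferences, then the 3CNF formula φ is satisfiable. -/
open Matrix

noncomputable section

/-- The conditions on `ε` and `M` from the construction: for all `(i₁,q₁) ≠ (i₂,q₂)`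
with indices between `1` and `I`,
`1 < p^{q₁}_{i₁}·z^{q₁}_{i₁} + ε p^{q₁}_{i₁}·(1,1) < p^{q₁}_{i₁}·z^{q₂}_{i₂}` and
`p^{q₁}_{i₁}·z^{q₂}_{i₂} + ε p^{q₁}_{i₁}·(1,1) < M`. -/
def EpsM (I : ℕ) (ε M : ℝ) : Prop :=
  0 < ε ∧ 0 < M ∧
  ∀ (i₁ i₂ : ℕ) (q₁ q₂ : Fin 2), 1 ≤ i₁ → i₁ ≤ I → 1 ≤ i₂ → i₂ ≤ I →
    (i₁, q₁) ≠ (i₂, q₂) →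
    1 < pv q₁ i₁ ⬝ᵥ zv q₁ i₁ + ε * (pv q₁ i₁ ⬝ᵥ ![1, 1]) ∧
    pv q₁ i₁ ⬝ᵥ zv q₁ i₁ + ε * (pv q₁ i₁ ⬝ᵥ ![1, 1]) < pv q₁ i₁ ⬝ᵥ zv q₂ i₂ ∧
    pv q₁ i₁ ⬝ᵥ zv q₂ i₂ + ε * (pv q₁ i₁ ⬝ᵥ ![1, 1]) < M

/-- A 3-literal clause `yᵢ ∨ yⱼ ∨ y_h` over distinct variables `xᵢ, xⱼ, x_h`:
the fields `si, sj, sh` record the signs of the literals (`true` = positive). -/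
structure ClauseData where
  i : ℕ
  j : ℕ
  h : ℕ
  si : Bool
  sj : Bool
  sh : Bool

/-- The clause has its three (distinct) variables among `x₁,…,x_I`. -/
def ClauseData.Valid (C : ClauseData) (I : ℕ) : Prop :=
  1 ≤ C.i ∧ C.i ≤ I ∧ 1 ≤ C.j ∧ C.j ≤ I ∧ 1 ≤ C.h ∧ C.h ≤ I ∧
  C.i ≠ C.j ∧ C.i ≠ C.h ∧ C.j ≠ C.h

/-- The clause is true under the truth assignment `τ`. -/
def ClauseTrue (C : ClauseData) (τ : ℕ → Bool) : Prop :=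
  τ C.i = C.si ∨ τ C.j = C.sj ∨ τ C.h = C.sh

/-- `ẑᵠ_k`: equal to `zᵠ_k` for a positive literal and to `z^{3-q}_k` for a negated one
(in our `Fin 2` indexing, `q ↦ q + 1` swaps the two superscripts). -/
def hatz (σ : Bool) (q : Fin 2) (k : ℕ) : Fin 2 → ℝ :=
  if σ then zv q k else zv (q + 1) k

/-- `ρ(ẑᵠ_k)`: equal to `pᵠ_k` for a positive literal and to `p^{3-q}_k` for a negated one. -/
def hatp (σ : Bool) (q : Fin 2) (k : ℕ) : Fin 2 → ℝ :=
  if σ then pv q k else pv (q + 1) k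

/-- Embedding of `ℝ²` into `ℝ⁸` (zero in the remaining coordinates). -/
def emb2 (x : Fin 2 → ℝ) : Fin 8 → ℝ := fun s =>
  if hs : (s : ℕ) < 2 then x ⟨s, hs⟩ else 0

/-- Standard basis vector of `ℝ⁸` (note: the paper's `e_s` is `estd (s-1)`). -/
def estd (s : Fin 8) : Fin 8 → ℝ := fun t => if t = s then 1 else 0

/-- The bundles `w₁,…,w₉ ∈ ℝ⁸₊` of the single-clause construction. -/
def wb (C : ClauseData) (ε : ℝ) : ℕ → (Fin 8 → ℝ) := fun t =>
  if t = 1 then emb2 (hatz C.si 1 C.i) + estd 2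
  else if t = 2 then emb2 (hatz C.sj 0 C.j) + ε • (estd 0 + estd 1) + estd 3
  else if t = 3 then emb2 (hatz C.sj 0 C.j) + estd 2 + estd 6
  else if t = 4 then emb2 (hatz C.sj 1 C.j) + estd 2 + estd 6
  else if t = 5 then emb2 (hatz C.sh 0 C.h) + ε • (estd 0 + estd 1) + estd 4
  else if t = 6 then emb2 (hatz C.sh 0 C.h) + estd 2 + estd 7
  else if t = 7 then emb2 (hatz C.sh 1 C.h) + estd 2 + estd 7
  else if t = 8 then emb2 (hatz C.si 0 C.i) + ε • (estd 0 + estd 1) + estd 5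
  else if t = 9 then emb2 (hatz C.si 0 C.i) + estd 2
  else 0

/-- The prices `r₁, r₂, r₄, r₅, r₇, r₈ ∈ ℝ⁸₊` of the single-clause construction. -/
def rb (C : ClauseData) (M : ℝ) : ℕ → (Fin 8 → ℝ) := fun k =>
  if k = 1 then emb2 (hatp C.si 1 C.i) + M • estd 2 + (2 * M) • (estd 4 + estd 5)
  else if k = 2 then emb2 (hatp C.sj 0 C.j)
  else if k = 4 then emb2 (hatp C.sj 1 C.j) + M • estd 2 + (2 * M) • (estd 3 + estd 5)
  else if k = 5 then emb2 (hatp C.sh 0 C.h)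
  else if k = 7 then emb2 (hatp C.sh 1 C.h) + M • estd 2 + (2 * M) • (estd 3 + estd 4)
  else if k = 8 then emb2 (hatp C.si 0 C.i)
  else 0

/-- The index set `{1,2,4,5,7,8}` of observed bundles. -/
def idx : Finset ℕ := {1, 2, 4, 5, 7, 8}

/-- `z`-component (first two coordinates) of a bundle in `ℝ⁸`. -/
def projz (w : Fin 8 → ℝ) : Fin 2 → ℝ := fun t => w (Fin.castLE (by norm_num) t)

/-- `o`-component (last six coordinates) of a bundle in `ℝ⁸`. -/
def projo (w : Fin 8 → ℝ) : Fin 6 → ℝ := fun t => w ⟨(t : ℕ) + 2, by have := t.isLt; omega⟩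

/-- A bundle in `ℝ⁸` viewed as a pair `(z, o) ∈ ℝ² × ℝ⁶`. -/
def pairify (w : Fin 8 → ℝ) : (Fin 2 → ℝ) × (Fin 6 → ℝ) := (projz w, projo w)

/-- A pair `(z, o) ∈ ℝ² × ℝ⁶` viewed as a bundle in `ℝ⁸`. -/
def glue (p : (Fin 2 → ℝ) × (Fin 6 → ℝ)) : Fin 8 → ℝ := fun s =>
  if hs : (s : ℕ) < 2 then p.1 ⟨s, hs⟩
  else p.2 ⟨(s : ℕ) - 2, by have := s.isLt; omega⟩

/-- `X_z`: the set of `z`-components of `w₁,…,w₉`. -/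
def Xz (C : ClauseData) (ε : ℝ) : Set (Fin 2 → ℝ) :=
  {z | ∃ t : ℕ, 1 ≤ t ∧ t ≤ 9 ∧ z = projz (wb C ε t)}

/-- `X_o`: the set of `o`-components of `w₁,…,w₉`. -/
def Xo (C : ClauseData) (ε : ℝ) : Set (Fin 6 → ℝ) :=
  {o | ∃ t : ℕ, 1 ≤ t ∧ t ≤ 9 ∧ o = projo (wb C ε t)}

/-- `X = X_z × X_o`. -/
def Xset (C : ClauseData) (ε : ℝ) : Set ((Fin 2 → ℝ) × (Fin 6 → ℝ)) :=
  {p | p.1 ∈ Xz C ε ∧ p.2 ∈ Xo C ε}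

/-- The revealed-preference relation `R` on `X`: `w R w'` iff `w = w_k` for some
`k ∈ {1,2,4,5,7,8}` and `r_k · w_k > r_k · w'`. -/
def Rrel (C : ClauseData) (ε M : ℝ) (a b : (Fin 2 → ℝ) × (Fin 6 → ℝ)) : Prop :=
  a ∈ Xset C ε ∧ b ∈ Xset C ε ∧
  ∃ k ∈ idx, a = pairify (wb C ε k) ∧ rb C M k ⬝ᵥ wb C ε k > rb C M k ⬝ᵥ glue b

/-- Embedding of `ℝ⁸` into `ℝ⁹`. -/
def emb89 (x : Fin 8 → ℝ) : Fin 9 → ℝ := fun s =>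
  if hs : (s : ℕ) < 8 then x ⟨s, hs⟩ else 0

/-- Standard basis vector of `ℝ⁹` (the paper's `e₉` is `estd9 8`). -/
def estd9 (s : Fin 9) : Fin 9 → ℝ := fun t => if t = s then 1 else 0

/-- `wˡ_t ∈ ℝ⁹`: the embedding of `w_t` (for clause `C_l`) into `ℝ⁹` plus `M·2ˡ e₉`. -/
def wl (Cl : ℕ → ClauseData) (ε M : ℝ) (l t : ℕ) : Fin 9 → ℝ :=
  emb89 (wb (Cl l) ε t) + (M * 2 ^ l) • estd9 8

/-- `rˡ_k ∈ ℝ⁹`: `e₉` plus the embedding of `r_k` (for clause `C_l`) into `ℝ⁹`. -/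
def rl (Cl : ℕ → ClauseData) (M : ℝ) (l k : ℕ) : Fin 9 → ℝ :=
  estd9 8 + emb89 (rb (Cl l) M k)

/-- `z`-component (first two coordinates) of a bundle in `ℝ⁹`. -/
def projz9 (w : Fin 9 → ℝ) : Fin 2 → ℝ := fun t => w (Fin.castLE (by norm_num) t)

/-- `o`-component (last seven coordinates) of a bundle in `ℝ⁹`. -/
def projo9 (w : Fin 9 → ℝ) : Fin 7 → ℝ := fun t => w ⟨(t : ℕ) + 2, by have := t.isLt; omega⟩

/-- A bundle in `ℝ⁹` viewed as a pair `(z, o) ∈ ℝ² × ℝ⁷`. -/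
def pairify9 (w : Fin 9 → ℝ) : (Fin 2 → ℝ) × (Fin 7 → ℝ) := (projz9 w, projo9 w)

/-- A pair `(z, o) ∈ ℝ² × ℝ⁷` viewed as a bundle in `ℝ⁹`. -/
def glue9 (p : (Fin 2 → ℝ) × (Fin 7 → ℝ)) : Fin 9 → ℝ := fun s =>
  if hs : (s : ℕ) < 2 then p.1 ⟨s, hs⟩
  else p.2 ⟨(s : ℕ) - 2, by have := s.isLt; omega⟩

/-- `Xˡ_z`: the set of `z`-components of `wˡ₁,…,wˡ₉`. -/
def Xzl (Cl : ℕ → ClauseData) (ε M : ℝ) (l : ℕ) : Set (Fin 2 → ℝ) :=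
  {z | ∃ t : ℕ, 1 ≤ t ∧ t ≤ 9 ∧ z = projz9 (wl Cl ε M l t)}

/-- `Xˡ_o`: the set of `o`-components of `wˡ₁,…,wˡ₉`. -/
def Xol (Cl : ℕ → ClauseData) (ε M : ℝ) (l : ℕ) : Set (Fin 7 → ℝ) :=
  {o | ∃ t : ℕ, 1 ≤ t ∧ t ≤ 9 ∧ o = projo9 (wl Cl ε M l t)}

/-- `Xˡ = Xˡ_z × Xˡ_o`. -/
def Xl (Cl : ℕ → ClauseData) (ε M : ℝ) (l : ℕ) : Set ((Fin 2 → ℝ) × (Fin 7 → ℝ)) :=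
  {p | p.1 ∈ Xzl Cl ε M l ∧ p.2 ∈ Xol Cl ε M l}

/-- `X̄ = ∪_{l=1}^L Xˡ`. -/
def Xbar (Cl : ℕ → ClauseData) (ε M : ℝ) (L : ℕ) : Set ((Fin 2 → ℝ) × (Fin 7 → ℝ)) :=
  {p | ∃ l : ℕ, 1 ≤ l ∧ l ≤ L ∧ p ∈ Xl Cl ε M l}

/-- `X̄_z = ∪_{l=1}^L Xˡ_z`. -/
def Xzbar (Cl : ℕ → ClauseData) (ε M : ℝ) (L : ℕ) : Set (Fin 2 → ℝ) :=
  {z | ∃ l : ℕ, 1 ≤ l ∧ l ≤ L ∧ z ∈ Xzl Cl ε M l}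

/-- The relation `Rˡ` on `Xˡ`: `w Rˡ w'` iff `w = wˡ_k` for some `k ∈ {1,2,4,5,7,8}`
and `rˡ_k · wˡ_k > rˡ_k · w'`. -/
def Rl (Cl : ℕ → ClauseData) (ε M : ℝ) (l : ℕ)
    (a b : (Fin 2 → ℝ) × (Fin 7 → ℝ)) : Prop :=
  a ∈ Xl Cl ε M l ∧ b ∈ Xl Cl ε M l ∧
  ∃ k ∈ idx, a = pairify9 (wl Cl ε M l k) ∧
    rl Cl M l k ⬝ᵥ wl Cl ε M l k > rl Cl M l k ⬝ᵥ glue9 b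

/-- The relation `R̄` on `X̄`: `w R̄ w'` iff there are `l` and `k ∈ {1,2,4,5,7,8}`
with `w = wˡ_k` and `rˡ_k · wˡ_k > rˡ_k · w'`. -/
def Rbar (Cl : ℕ → ClauseData) (ε M : ℝ) (L : ℕ)
    (a b : (Fin 2 → ℝ) × (Fin 7 → ℝ)) : Prop :=
  a ∈ Xbar Cl ε M L ∧ b ∈ Xbar Cl ε M L ∧
  ∃ l : ℕ, 1 ≤ l ∧ l ≤ L ∧ ∃ k ∈ idx, a = pairify9 (wl Cl ε M l k) ∧
    rl Cl M l k ⬝ᵥ wl Cl ε M l k > rl Cl M l k ⬝ᵥ glue9 b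

/-- The dataset `D(φ) = {(wˡ_t, rˡ_t)}` (with `n = 2` goods of type `z` and `m = 7`
goods of type `o`) is rationalizable by separable preferences: there are monotone
increasing `u : ℝ²₊ → ℝ` and `v : ℝ^{1+7} → ℝ` such that every affordable bundle
`(z,o) ≠ (zˡ_t, oˡ_t)` at prices `rˡ_t` satisfies `v (u z, o) < v (u zˡ_t, oˡ_t)`. -/
def SepRationalizable (Cl : ℕ → ClauseData) (ε M : ℝ) (L : ℕ) : Prop :=
  ∃ u : (Fin 2 → ℝ) → ℝ, ∃ v : ℝ × (Fin 7 → ℝ) → ℝ,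
    (∀ z z' : Fin 2 → ℝ, 0 ≤ z' → z' ≤ z → z ≠ z' → u z' < u z) ∧
    (∀ a b : ℝ × (Fin 7 → ℝ), a ≤ b → a ≠ b → v a < v b) ∧
    (∀ l : ℕ, 1 ≤ l → l ≤ L → ∀ t ∈ idx, ∀ (z : Fin 2 → ℝ) (o : Fin 7 → ℝ),
      0 ≤ z → 0 ≤ o → (z, o) ≠ pairify9 (wl Cl ε M l t) →
      rl Cl M l t ⬝ᵥ glue9 (z, o) ≤ rl Cl M l t ⬝ᵥ wl Cl ε M l t →
      v (u z, o) < v (u (projz9 (wl Cl ε M l t)), projo9 (wl Cl ε M l t)))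

/-- The 3CNF formula with clauses `C₁,…,C_L` is satisfiable. -/
def FormulaSatisfiable (Cl : ℕ → ClauseData) (L : ℕ) : Prop :=
  ∃ τ : ℕ → Bool, ∀ l : ℕ, 1 ≤ l → l ≤ L → ClauseTrue (Cl l) τ

lemma zv_nonneg (q : Fin 2) (i : ℕ) : (0:Fin 2 → ℝ) ≤ zv q i := by
  intro s
  unfold zv
  split <;> fin_cases s <;> simp <;> positivity

lemma pv_nonneg (q : Fin 2) (i : ℕ) : (0:Fin 2 → ℝ) ≤ pv q i := by
  intro s
  unfold pv
  split <;> fin_cases s <;> simp <;> positivity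

lemma one_one_nonneg : (0 : Fin 2 → ℝ) ≤ ![1, 1] := by
  intro s; fin_cases s <;> norm_num

lemma dot2_nonneg {p z : Fin 2 → ℝ} (hp : (0:Fin 2 → ℝ) ≤ p) (hz : (0:Fin 2 → ℝ) ≤ z) :
    0 ≤ p ⬝ᵥ z :=
  Finset.sum_nonneg fun i _ => mul_nonneg (hp i) (hz i)

lemma hatz_nonneg (σ : Bool) (q : Fin 2) (k : ℕ) : (0 : Fin 2 → ℝ) ≤ hatz σ q k := by
  unfold hatz; split <;> exact zv_nonneg _ _

lemma hatz_eq (σ : Bool) (q : Fin 2) (k : ℕ) :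
    hatz σ q k = zv (if σ then q else q + 1) k := by
  cases σ <;> simp [hatz]

lemma hatp_eq (σ : Bool) (q : Fin 2) (k : ℕ) :
    hatp σ q k = pv (if σ then q else q + 1) k := by
  cases σ <;> simp [hatp]

lemma emb2_nonneg {x : Fin 2 → ℝ} (h : (0:Fin 2 → ℝ) ≤ x) : (0 : Fin 8 → ℝ) ≤ emb2 x := by
  intro s; unfold emb2; split
  · exact h _
  · exact le_refl _

lemma estd_nonneg (k : Fin 8) : (0 : Fin 8 → ℝ) ≤ estd k := by
  intro s; unfold estd; split <;> norm_num

lemma estd9_nonneg (k : Fin 9) : (0 : Fin 9 → ℝ) ≤ estd9 k := by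
  intro s; unfold estd9; split <;> norm_num

lemma emb89_nonneg {x : Fin 8 → ℝ} (h : (0:Fin 8 → ℝ) ≤ x) : (0 : Fin 9 → ℝ) ≤ emb89 x := by
  intro s; unfold emb89; split
  · exact h _
  · exact le_refl _

lemma wb_nonneg (C : ClauseData) {ε : ℝ} (hε : 0 ≤ ε) (t : ℕ) :
    (0 : Fin 8 → ℝ) ≤ wb C ε t := by
  unfold wb
  split_ifs <;>
    apply_rules [add_nonneg, smul_nonneg, emb2_nonneg, estd_nonneg, hatz_nonneg, le_refl]

lemma wl_nonneg (Cl : ℕ → ClauseData) {ε M : ℝ} (hε : 0 ≤ ε) (hM : 0 ≤ M) (l t : ℕ) :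
    (0 : Fin 9 → ℝ) ≤ wl Cl ε M l t := by
  unfold wl
  apply_rules [add_nonneg, smul_nonneg, emb89_nonneg, wb_nonneg, estd9_nonneg,
    mul_nonneg, pow_nonneg, le_refl]
  norm_num

lemma glue9_pairify9 (w : Fin 9 → ℝ) : glue9 (pairify9 w) = w := by
  funext s
  unfold glue9 pairify9 projz9 projo9
  split
  · exact rfl
  · next hs =>
      exact congrArg w (Fin.ext (by show (s : ℕ) - 2 + 2 = (s : ℕ); omega))

lemma rl_dot_wl (Cl : ℕ → ClauseData) (ε M : ℝ) (l k t : ℕ) :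
    rl Cl M l k ⬝ᵥ wl Cl ε M l t = rb (Cl l) M k ⬝ᵥ wb (Cl l) ε t + M * 2 ^ l := by
  simp (config := { decide := true }) [rl, wl, dotProduct, Fin.sum_univ_succ, estd9, emb89]
  ring

lemma L11 (C : ClauseData) (ε M : ℝ) :
    rb C M 1 ⬝ᵥ wb C ε 1 = hatp C.si 1 C.i ⬝ᵥ hatz C.si 1 C.i + M := by
  simp (config := { decide := true }) [rb, wb, dotProduct, Fin.sum_univ_succ, emb2, estd]
  ring

lemma L12 (C : ClauseData) (ε M : ℝ) :
    rb C M 1 ⬝ᵥ wb C ε 2 = hatp C.si 1 C.i ⬝ᵥ hatz C.sj 0 C.j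
      + ε * (hatp C.si 1 C.i ⬝ᵥ ![1, 1]) := by
  simp (config := { decide := true }) [rb, wb, dotProduct, Fin.sum_univ_succ, emb2, estd]
  ring

lemma L22 (C : ClauseData) (ε M : ℝ) :
    rb C M 2 ⬝ᵥ wb C ε 2 = hatp C.sj 0 C.j ⬝ᵥ hatz C.sj 0 C.j
      + ε * (hatp C.sj 0 C.j ⬝ᵥ ![1, 1]) := by
  simp (config := { decide := true }) [rb, wb, dotProduct, Fin.sum_univ_succ, emb2, estd]
  ring

lemma L23 (C : ClauseData) (ε M : ℝ) :
    rb C M 2 ⬝ᵥ wb C ε 3 = hatp C.sj 0 C.j ⬝ᵥ hatz C.sj 0 C.j := by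
  simp (config := { decide := true }) [rb, wb, dotProduct, Fin.sum_univ_succ, emb2, estd]

lemma L44 (C : ClauseData) (ε M : ℝ) :
    rb C M 4 ⬝ᵥ wb C ε 4 = hatp C.sj 1 C.j ⬝ᵥ hatz C.sj 1 C.j + M := by
  simp (config := { decide := true }) [rb, wb, dotProduct, Fin.sum_univ_succ, emb2, estd]
  ring

lemma L45 (C : ClauseData) (ε M : ℝ) :
    rb C M 4 ⬝ᵥ wb C ε 5 = hatp C.sj 1 C.j ⬝ᵥ hatz C.sh 0 C.h
      + ε * (hatp C.sj 1 C.j ⬝ᵥ ![1, 1]) := by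
  simp (config := { decide := true }) [rb, wb, dotProduct, Fin.sum_univ_succ, emb2, estd]
  ring

lemma L55 (C : ClauseData) (ε M : ℝ) :
    rb C M 5 ⬝ᵥ wb C ε 5 = hatp C.sh 0 C.h ⬝ᵥ hatz C.sh 0 C.h
      + ε * (hatp C.sh 0 C.h ⬝ᵥ ![1, 1]) := by
  simp (config := { decide := true }) [rb, wb, dotProduct, Fin.sum_univ_succ, emb2, estd]
  ring

lemma L56 (C : ClauseData) (ε M : ℝ) :
    rb C M 5 ⬝ᵥ wb C ε 6 = hatp C.sh 0 C.h ⬝ᵥ hatz C.sh 0 C.h := by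
  simp (config := { decide := true }) [rb, wb, dotProduct, Fin.sum_univ_succ, emb2, estd]

lemma L77 (C : ClauseData) (ε M : ℝ) :
    rb C M 7 ⬝ᵥ wb C ε 7 = hatp C.sh 1 C.h ⬝ᵥ hatz C.sh 1 C.h + M := by
  simp (config := { decide := true }) [rb, wb, dotProduct, Fin.sum_univ_succ, emb2, estd]
  ring

lemma L78 (C : ClauseData) (ε M : ℝ) :
    rb C M 7 ⬝ᵥ wb C ε 8 = hatp C.sh 1 C.h ⬝ᵥ hatz C.si 0 C.i
      + ε * (hatp C.sh 1 C.h ⬝ᵥ ![1, 1]) := by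
  simp (config := { decide := true }) [rb, wb, dotProduct, Fin.sum_univ_succ, emb2, estd]
  ring

lemma L88 (C : ClauseData) (ε M : ℝ) :
    rb C M 8 ⬝ᵥ wb C ε 8 = hatp C.si 0 C.i ⬝ᵥ hatz C.si 0 C.i
      + ε * (hatp C.si 0 C.i ⬝ᵥ ![1, 1]) := by
  simp (config := { decide := true }) [rb, wb, dotProduct, Fin.sum_univ_succ, emb2, estd]
  ring

lemma L89 (C : ClauseData) (ε M : ℝ) :
    rb C M 8 ⬝ᵥ wb C ε 9 = hatp C.si 0 C.i ⬝ᵥ hatz C.si 0 C.i := by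
  simp (config := { decide := true }) [rb, wb, dotProduct, Fin.sum_univ_succ, emb2, estd]
section Proj

variable (Cl : ℕ → ClauseData) (ε M : ℝ) (l : ℕ)

lemma projz9_wl1 : projz9 (wl Cl ε M l 1) = hatz (Cl l).si 1 (Cl l).i := by
  funext s
  fin_cases s <;>
    simp (config := { decide := true }) [projz9, wl, wb, emb89, emb2, estd, estd9, Fin.castLE]

lemma projz9_wl3 : projz9 (wl Cl ε M l 3) = hatz (Cl l).sj 0 (Cl l).j := by
  funext s
  fin_cases s <;>
    simp (config := { decide := true }) [projz9, wl, wb, emb89, emb2, estd, estd9, Fin.castLE]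

lemma projz9_wl4 : projz9 (wl Cl ε M l 4) = hatz (Cl l).sj 1 (Cl l).j := by
  funext s
  fin_cases s <;>
    simp (config := { decide := true }) [projz9, wl, wb, emb89, emb2, estd, estd9, Fin.castLE]

lemma projz9_wl6 : projz9 (wl Cl ε M l 6) = hatz (Cl l).sh 0 (Cl l).h := by
  funext s
  fin_cases s <;>
    simp (config := { decide := true }) [projz9, wl, wb, emb89, emb2, estd, estd9, Fin.castLE]

lemma projz9_wl7 : projz9 (wl Cl ε M l 7) = hatz (Cl l).sh 1 (Cl l).h := by
  funext s
  fin_cases s <;>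
    simp (config := { decide := true }) [projz9, wl, wb, emb89, emb2, estd, estd9, Fin.castLE]

lemma projz9_wl9 : projz9 (wl Cl ε M l 9) = hatz (Cl l).si 0 (Cl l).i := by
  funext s
  fin_cases s <;>
    simp (config := { decide := true }) [projz9, wl, wb, emb89, emb2, estd, estd9, Fin.castLE]

lemma projo9_wl34 : projo9 (wl Cl ε M l 3) = projo9 (wl Cl ε M l 4) := by
  funext s
  fin_cases s <;>
    simp (config := { decide := true }) [projo9, wl, wb, emb89, emb2, estd, estd9]

lemma projo9_wl67 : projo9 (wl Cl ε M l 6) = projo9 (wl Cl ε M l 7) := by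
  funext s
  fin_cases s <;>
    simp (config := { decide := true }) [projo9, wl, wb, emb89, emb2, estd, estd9]

lemma projo9_wl91 : projo9 (wl Cl ε M l 9) = projo9 (wl Cl ε M l 1) := by
  funext s
  fin_cases s <;>
    simp (config := { decide := true }) [projo9, wl, wb, emb89, emb2, estd, estd9]

lemma projo9_wl1_0 : projo9 (wl Cl ε M l 1) 0 = 1 := by
  simp (config := { decide := true }) [projo9, wl, wb, emb89, emb2, estd, estd9]

lemma projo9_wl2_0 : projo9 (wl Cl ε M l 2) 0 = 0 := by
  simp (config := { decide := true }) [projo9, wl, wb, emb89, emb2, estd, estd9]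

lemma projo9_wl3_0 : projo9 (wl Cl ε M l 3) 0 = 1 := by
  simp (config := { decide := true }) [projo9, wl, wb, emb89, emb2, estd, estd9]

lemma projo9_wl4_0 : projo9 (wl Cl ε M l 4) 0 = 1 := by
  simp (config := { decide := true }) [projo9, wl, wb, emb89, emb2, estd, estd9]

lemma projo9_wl5_0 : projo9 (wl Cl ε M l 5) 0 = 0 := by
  simp (config := { decide := true }) [projo9, wl, wb, emb89, emb2, estd, estd9]

lemma projo9_wl6_0 : projo9 (wl Cl ε M l 6) 0 = 1 := by
  simp (config := { decide := true }) [projo9, wl, wb, emb89, emb2, estd, estd9]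

lemma projo9_wl7_0 : projo9 (wl Cl ε M l 7) 0 = 1 := by
  simp (config := { decide := true }) [projo9, wl, wb, emb89, emb2, estd, estd9]

lemma projo9_wl8_0 : projo9 (wl Cl ε M l 8) 0 = 0 := by
  simp (config := { decide := true }) [projo9, wl, wb, emb89, emb2, estd, estd9]

lemma projo9_wl9_0 : projo9 (wl Cl ε M l 9) 0 = 1 := by
  simp (config := { decide := true }) [projo9, wl, wb, emb89, emb2, estd, estd9]

end Proj

lemma key_u (u : (Fin 2 → ℝ) → ℝ) (σ : Bool) (k : ℕ)
    (h : decide (u (zv 0 k) < u (zv 1 k)) ≠ σ) :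
    u (hatz σ 1 k) ≤ u (hatz σ 0 k) := by
  cases σ
  · have h2 : u (zv 0 k) < u (zv 1 k) := by simpa using h
    simpa [hatz, show ((1:Fin 2) + 1 : Fin 2) = 0 from rfl,
      show ((0:Fin 2) + 1 : Fin 2) = 1 from rfl] using h2.le
  · have h2 : ¬ (u (zv 0 k) < u (zv 1 k)) := by simpa using h
    simpa [hatz] using (not_lt.mp h2)
/-- if the dataset `D(φ) = {(wˡ_t, rˡ_t) : l = 1,…,L, t ∈ {1,2,4,5,7,8}}`
is rationalizable by separable preferences, then the 3CNF formula `φ` is satisfiable. -/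
theorem statement12 (I L : ℕ) (hI : 1 ≤ I) (hL : 1 ≤ L) (Cl : ℕ → ClauseData)
    (hCl : ∀ l : ℕ, 1 ≤ l → l ≤ L → (Cl l).Valid I)
    (ε M : ℝ) (hεM : EpsM I ε M)
    (hrat : SepRationalizable Cl ε M L) :
    FormulaSatisfiable Cl L := by
  obtain ⟨hε, hM, hEM⟩ := hεM
  obtain ⟨u, v, hu, hv, hr⟩ := hrat
  refine ⟨fun k => decide (u (zv 0 k) < u (zv 1 k)), ?_⟩
  intro l hl1 hlL
  by_contra hcl
  simp only [ClauseTrue, not_or] at hcl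
  obtain ⟨hti, htj, hth⟩ := hcl
  obtain ⟨h1i, hiI, h1j, hjI, h1h, hhI, hij, hih, hjh⟩ := hCl l hl1 hlL
  have hui := key_u u (Cl l).si (Cl l).i (by simpa using hti)
  have huj := key_u u (Cl l).sj (Cl l).j (by simpa using htj)
  have huh := key_u u (Cl l).sh (Cl l).h (by simpa using hth)
  -- weak monotonicity of v in the first coordinate
  have vle : ∀ (x y : ℝ) (o : Fin 7 → ℝ), x ≤ y → v (x, o) ≤ v (y, o) := by
    intro x y o hxy
    rcases eq_or_lt_of_le hxy with rfl | hlt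
    · exact le_refl _
    · refine le_of_lt (hv (x, o) (y, o) (Prod.mk_le_mk.mpr ⟨hxy, le_refl o⟩) ?_)
      intro hh
      exact absurd (congrArg Prod.fst hh) (ne_of_lt hlt)
  have hwnn : ∀ t : ℕ, (0:Fin 9 → ℝ) ≤ wl Cl ε M l t := fun t => wl_nonneg Cl hε.le hM.le l t
  -- notation for the chain values
  set V : ℕ → ℝ := fun t => v (u (projz9 (wl Cl ε M l t)), projo9 (wl Cl ε M l t)) with hV
  -- the six revealed-preference inequalities
  have mem1 : (1:ℕ) ∈ idx := by decide
  have mem2 : (2:ℕ) ∈ idx := by decide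
  have mem4 : (4:ℕ) ∈ idx := by decide
  have mem5 : (5:ℕ) ∈ idx := by decide
  have mem7 : (7:ℕ) ∈ idx := by decide
  have mem8 : (8:ℕ) ∈ idx := by decide
  have pvzv_nn : ∀ (q q' : Fin 2) (a b : ℕ), 0 ≤ pv q a ⬝ᵥ zv q' b :=
    fun q q' a b => dot2_nonneg (pv_nonneg q a) (zv_nonneg q' b)
  have pv1_nn : ∀ (q : Fin 2) (a : ℕ), 0 ≤ pv q a ⬝ᵥ ![1,1] :=
    fun q a => dot2_nonneg (pv_nonneg q a) one_one_nonneg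
  have Ha : V 2 < V 1 := by
    refine hr l hl1 hlL 1 mem1 (projz9 (wl Cl ε M l 2)) (projo9 (wl Cl ε M l 2))
      (fun s => hwnn 2 _) (fun s => hwnn 2 _) ?_ ?_
    · intro hq
      have h0 : projo9 (wl Cl ε M l 2) 0 = projo9 (wl Cl ε M l 1) 0 :=
        congrFun (congrArg Prod.snd hq) 0
      rw [projo9_wl2_0, projo9_wl1_0] at h0
      norm_num at h0
    · rw [show ((projz9 (wl Cl ε M l 2), projo9 (wl Cl ε M l 2)) :
          (Fin 2 → ℝ) × (Fin 7 → ℝ)) = pairify9 (wl Cl ε M l 2) from rfl,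
        glue9_pairify9, rl_dot_wl, rl_dot_wl, L12, L11, hatp_eq, hatz_eq, hatz_eq]
      have h3 := (hEM (Cl l).i (Cl l).j (if (Cl l).si then 1 else 1 + 1) (if (Cl l).sj then 0 else 0 + 1)
        h1i hiI h1j hjI (fun hh => hij (congrArg Prod.fst hh))).2.2
      have h4 := pvzv_nn (if (Cl l).si then 1 else 1 + 1) (if (Cl l).si then 1 else 1 + 1)
        (Cl l).i (Cl l).i
      linarith
  have Hb : v (u (projz9 (wl Cl ε M l 3)), projo9 (wl Cl ε M l 3)) < V 2 := by
    refine hr l hl1 hlL 2 mem2 (projz9 (wl Cl ε M l 3)) (projo9 (wl Cl ε M l 3))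
      (fun s => hwnn 3 _) (fun s => hwnn 3 _) ?_ ?_
    · intro hq
      have h0 : projo9 (wl Cl ε M l 3) 0 = projo9 (wl Cl ε M l 2) 0 :=
        congrFun (congrArg Prod.snd hq) 0
      rw [projo9_wl3_0, projo9_wl2_0] at h0
      norm_num at h0
    · rw [show ((projz9 (wl Cl ε M l 3), projo9 (wl Cl ε M l 3)) :
          (Fin 2 → ℝ) × (Fin 7 → ℝ)) = pairify9 (wl Cl ε M l 3) from rfl,
        glue9_pairify9, rl_dot_wl, rl_dot_wl, L23, L22, hatp_eq]
      have h4 := pv1_nn (if (Cl l).sj then 0 else 0 + 1) (Cl l).j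
      nlinarith
  have Hc : V 5 < V 4 := by
    refine hr l hl1 hlL 4 mem4 (projz9 (wl Cl ε M l 5)) (projo9 (wl Cl ε M l 5))
      (fun s => hwnn 5 _) (fun s => hwnn 5 _) ?_ ?_
    · intro hq
      have h0 : projo9 (wl Cl ε M l 5) 0 = projo9 (wl Cl ε M l 4) 0 :=
        congrFun (congrArg Prod.snd hq) 0
      rw [projo9_wl5_0, projo9_wl4_0] at h0
      norm_num at h0
    · rw [show ((projz9 (wl Cl ε M l 5), projo9 (wl Cl ε M l 5)) :
          (Fin 2 → ℝ) × (Fin 7 → ℝ)) = pairify9 (wl Cl ε M l 5) from rfl,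
        glue9_pairify9, rl_dot_wl, rl_dot_wl, L45, L44, hatp_eq, hatz_eq, hatz_eq]
      have h3 := (hEM (Cl l).j (Cl l).h (if (Cl l).sj then 1 else 1 + 1) (if (Cl l).sh then 0 else 0 + 1)
        h1j hjI h1h hhI (fun hh => hjh (congrArg Prod.fst hh))).2.2
      have h4 := pvzv_nn (if (Cl l).sj then 1 else 1 + 1) (if (Cl l).sj then 1 else 1 + 1)
        (Cl l).j (Cl l).j
      linarith
  have Hd : v (u (projz9 (wl Cl ε M l 6)), projo9 (wl Cl ε M l 6)) < V 5 := by
    refine hr l hl1 hlL 5 mem5 (projz9 (wl Cl ε M l 6)) (projo9 (wl Cl ε M l 6))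
      (fun s => hwnn 6 _) (fun s => hwnn 6 _) ?_ ?_
    · intro hq
      have h0 : projo9 (wl Cl ε M l 6) 0 = projo9 (wl Cl ε M l 5) 0 :=
        congrFun (congrArg Prod.snd hq) 0
      rw [projo9_wl6_0, projo9_wl5_0] at h0
      norm_num at h0
    · rw [show ((projz9 (wl Cl ε M l 6), projo9 (wl Cl ε M l 6)) :
          (Fin 2 → ℝ) × (Fin 7 → ℝ)) = pairify9 (wl Cl ε M l 6) from rfl,
        glue9_pairify9, rl_dot_wl, rl_dot_wl, L56, L55, hatp_eq]
      have h4 := pv1_nn (if (Cl l).sh then 0 else 0 + 1) (Cl l).h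
      nlinarith
  have He : V 8 < V 7 := by
    refine hr l hl1 hlL 7 mem7 (projz9 (wl Cl ε M l 8)) (projo9 (wl Cl ε M l 8))
      (fun s => hwnn 8 _) (fun s => hwnn 8 _) ?_ ?_
    · intro hq
      have h0 : projo9 (wl Cl ε M l 8) 0 = projo9 (wl Cl ε M l 7) 0 :=
        congrFun (congrArg Prod.snd hq) 0
      rw [projo9_wl8_0, projo9_wl7_0] at h0
      norm_num at h0
    · rw [show ((projz9 (wl Cl ε M l 8), projo9 (wl Cl ε M l 8)) :
          (Fin 2 → ℝ) × (Fin 7 → ℝ)) = pairify9 (wl Cl ε M l 8) from rfl,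
        glue9_pairify9, rl_dot_wl, rl_dot_wl, L78, L77, hatp_eq, hatz_eq, hatz_eq]
      have h3 := (hEM (Cl l).h (Cl l).i (if (Cl l).sh then 1 else 1 + 1) (if (Cl l).si then 0 else 0 + 1)
        h1h hhI h1i hiI (fun hh => hih (congrArg Prod.fst hh).symm)).2.2
      have h4 := pvzv_nn (if (Cl l).sh then 1 else 1 + 1) (if (Cl l).sh then 1 else 1 + 1)
        (Cl l).h (Cl l).h
      linarith
  have Hf : v (u (projz9 (wl Cl ε M l 9)), projo9 (wl Cl ε M l 9)) < V 8 := by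
    refine hr l hl1 hlL 8 mem8 (projz9 (wl Cl ε M l 9)) (projo9 (wl Cl ε M l 9))
      (fun s => hwnn 9 _) (fun s => hwnn 9 _) ?_ ?_
    · intro hq
      have h0 : projo9 (wl Cl ε M l 9) 0 = projo9 (wl Cl ε M l 8) 0 :=
        congrFun (congrArg Prod.snd hq) 0
      rw [projo9_wl9_0, projo9_wl8_0] at h0
      norm_num at h0
    · rw [show ((projz9 (wl Cl ε M l 9), projo9 (wl Cl ε M l 9)) :
          (Fin 2 → ℝ) × (Fin 7 → ℝ)) = pairify9 (wl Cl ε M l 9) from rfl,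
        glue9_pairify9, rl_dot_wl, rl_dot_wl, L89, L88, hatp_eq]
      have h4 := pv1_nn (if (Cl l).si then 0 else 0 + 1) (Cl l).i
      nlinarith
  -- the three monotone links
  have link_i : V 1 ≤ v (u (projz9 (wl Cl ε M l 9)), projo9 (wl Cl ε M l 9)) := by
    rw [hV]
    simp only []
    rw [projz9_wl1, projz9_wl9, projo9_wl91]
    exact vle _ _ _ hui
  have link_j : V 4 ≤ v (u (projz9 (wl Cl ε M l 3)), projo9 (wl Cl ε M l 3)) := by
    rw [hV]
    simp only []
    rw [projz9_wl4, projz9_wl3, projo9_wl34]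
    exact vle _ _ _ huj
  have link_h : V 7 ≤ v (u (projz9 (wl Cl ε M l 6)), projo9 (wl Cl ε M l 6)) := by
    rw [hV]
    simp only []
    rw [projz9_wl7, projz9_wl6, projo9_wl67]
    exact vle _ _ _ huh
  linarith
end
end
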